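/- Let f: ℝⁿ → ℝ be continuously differentiable with L₁-Lipschitz gradient with respect to ‖·‖₂ and with ‖∇f(y)‖₂ ≤ G for all y ∈ ℝⁿ, let x ∈ ℝⁿ, μ > 0, V ≥ 0, and let U ~ N(0_n, I_n) be defined on a probability space on which there are also square-integrable real-valued random variables e¹ and e² with E[(e¹)² | U] ≤ V² and E[(e²)² | U] ≤ V² almost surely. Define the approximated subgradient g̃ = ((f(x + μU) + e¹ − f(x) − e²)/μ) U. Then E[‖g̃‖_*²] ≤ κ₁² ( (3/4) L₁² μ² (n + 6)³ + 3 G² (n + 4)² + 12 (V²/μ²) n ). -/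

import Mathlib

open MeasureTheory ProbabilityTheory Real Filter
open scoped RealInnerProductSpace

/-- The standard Gaussian measure `N(0ₙ, Iₙ)` on `ℝⁿ` (as `EuclideanSpace ℝ (Fin n)`). -/
noncomputable def stdGaussian (n : ℕ) : Measure (EuclideanSpace ℝ (Fin n)) :=
  (Measure.pi fun _ : Fin n => gaussianReal 0 1).map
    (MeasurableEquiv.toLp 2 (Fin n → ℝ))

/-- `N` is a norm on a real vector space. -/
def IsNorm {E : Type*} [AddCommGroup E] [Module ℝ E] (N : E → ℝ) : Prop :=
  (∀ x, N x = 0 ↔ x = 0) ∧ (∀ (c : ℝ) (x : E), N (c • x) = |c| * N x) ∧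
    ∀ x y, N (x + y) ≤ N x + N y

/-- The dual norm `‖y‖_* = sup { ⟨y, x⟩ : N x ≤ 1 }` of a norm `N` on `ℝⁿ`. -/
noncomputable def dualNorm {n : ℕ} (N : EuclideanSpace ℝ (Fin n) → ℝ)
    (y : EuclideanSpace ℝ (Fin n)) : ℝ :=
  sSup ((fun x => ⟪y, x⟫) '' {x | N x ≤ 1})

/-!
Since `‖∇f‖₂ ≤ G`, `f` is `G`-Lipschitz, so `|f(x + μU) − f(x)| ≤ Gμ‖U‖₂` and
`‖g̃‖_*² ≤ κ₁²‖g̃‖₂² ≤ κ₁² (2G²‖U‖₂⁴ + 4((e¹)² + (e²)²)‖U‖₂²/μ²)`.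
For `U ~ N(0, Iₙ)` we have `E‖U‖₂² = n` and `E‖U‖₂⁴ = n² + 2n`, the squared coordinates being
independent with mean `1` and variance `2`. Conditioning on `U`,
`E[(eⁱ)²‖U‖₂²] ≤ V² E‖U‖₂² = V²n`. Hence `E‖g̃‖_*² ≤ κ₁² (2G²(n² + 2n) + 8V²n/μ²)`, which is below
the claimed bound because `2(n² + 2n) ≤ 3(n + 4)²`.
-/

open scoped ENNReal Nat

lemma integral_pow_two_mul_gaussianReal (k : ℕ) :
    ∫ x, x ^ (2 * k) ∂gaussianReal 0 1 = (2 * k - 1 : ℕ)‼ := by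
  have hIoi : ∫ x in Set.Ioi (0 : ℝ), x ^ (2 * k) * exp (-(1 / 2) * x ^ 2)
      = 2 ^ k * √2 * (1 / 2) * Gamma (k + 1 / 2) := by
    have h := integral_rpow_mul_exp_neg_mul_rpow (p := 2) (q := (2 * k : ℕ)) two_pos
      (by linarith [(2 * k : ℕ).cast_nonneg (α := ℝ)]) (by norm_num : (0 : ℝ) < 1 / 2)
    have hexp : (1 / 2 : ℝ) ^ (-(((2 * k : ℕ) : ℝ) + 1) / 2) = 2 ^ k * √2 := by
      rw [one_div, inv_rpow zero_le_two, ← rpow_neg zero_le_two, sqrt_eq_rpow, ← rpow_natCast,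
        ← rpow_add two_pos]
      push_cast; ring_nf
    rw [hexp, show (((2 * k : ℕ) : ℝ) + 1) / 2 = k + 1 / 2 by push_cast; ring] at h
    rw [← h]
    refine setIntegral_congr_fun measurableSet_Ioi fun x _ => ?_
    simp only [rpow_natCast, rpow_two]
  have hR : ∫ x, x ^ (2 * k) * exp (-(1 / 2) * x ^ 2)
      = 2 * ∫ x in Set.Ioi (0 : ℝ), x ^ (2 * k) * exp (-(1 / 2) * x ^ 2) := by
    rw [← integral_comp_abs (f := fun x : ℝ => x ^ (2 * k) * exp (-(1 / 2) * x ^ 2))]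
    simp only [pow_mul, sq_abs]
  have hpdf (x : ℝ) : gaussianPDFReal 0 1 x = (√(2 * π))⁻¹ * exp (-(1 / 2) * x ^ 2) := by
    simp only [gaussianPDFReal]; push_cast; ring_nf
  simp_rw [integral_gaussianReal_eq_integral_smul one_ne_zero, hpdf, smul_eq_mul, mul_assoc,
    integral_const_mul, mul_comm (exp _)]
  rw [hR, hIoi, Gamma_nat_add_half, sqrt_mul zero_le_two]
  field_simp

lemma memLp_sq_gaussianReal : MemLp (fun x : ℝ => x ^ 2) 2 (gaussianReal 0 1) := by
  refine (memLp_two_iff_integrable_sq (by fun_prop)).2 ?_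
  convert (memLp_id_gaussianReal (μ := 0) (v := 1) 4).integrable_norm_pow' using 2 with x
  rw [id, norm_eq_abs, ← pow_mul, Even.pow_abs (by decide)]

lemma variance_sq_gaussianReal : Var[fun x : ℝ => x ^ 2; gaussianReal 0 1] = 2 := by
  rw [variance_eq_sub memLp_sq_gaussianReal]
  have h4 := integral_pow_two_mul_gaussianReal 2
  have h2 := integral_pow_two_mul_gaussianReal 1
  simp only [Pi.pow_apply, ← pow_mul] at *
  norm_num [h4, h2]

lemma memLp_coord_sq_pi {n : ℕ} (i : Fin n) :
    MemLp (fun x => x i ^ 2) 2 (Measure.pi fun _ : Fin n => gaussianReal 0 1) :=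
  memLp_sq_gaussianReal.comp_measurePreserving (measurePreserving_eval _ i)

lemma integral_sum_sq_pi (n : ℕ) :
    ∫ x, ∑ i, x i ^ 2 ∂Measure.pi (fun _ : Fin n => gaussianReal 0 1) = n := by
  have h (i : Fin n) : ∫ x, x i ^ 2 ∂Measure.pi (fun _ : Fin n => gaussianReal 0 1) = 1 := by
    rw [integral_comp_eval (μ := fun _ : Fin n => gaussianReal 0 1) (f := fun t : ℝ => t ^ 2)
      (by fun_prop)]
    simpa using integral_pow_two_mul_gaussianReal 1
  rw [integral_finsetSum _ fun i _ => (memLp_coord_sq_pi i).integrable one_le_two]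
  simp [h]

-- With `S = ∑ xᵢ²`: `E[S²] = Var S + (E S)²`, and `Var S = ∑ Var xᵢ² = 2n` by independence.
lemma integral_sum_sq_sq_pi (n : ℕ) :
    ∫ x, (∑ i, x i ^ 2) ^ 2 ∂Measure.pi (fun _ : Fin n => gaussianReal 0 1) = n ^ 2 + 2 * n := by
  have hvar := variance_sum_pi (μ := fun _ : Fin n => gaussianReal 0 1)
    (X := fun _ t => t ^ 2) fun _ => memLp_sq_gaussianReal
  rw [variance_eq_sub (memLp_finsetSum' _ fun i _ => memLp_coord_sq_pi i)] at hvar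
  simp only [variance_sq_gaussianReal, Finset.sum_const, Finset.card_univ, Fintype.card_fin,
    nsmul_eq_mul, Finset.sum_apply, Pi.pow_apply, integral_sum_sq_pi] at hvar
  linarith

lemma stdGaussian_eq_stdGaussian_euclideanSpace (n : ℕ) :
    _root_.stdGaussian n = ProbabilityTheory.stdGaussian (EuclideanSpace ℝ (Fin n)) :=
  map_pi_eq_stdGaussian

lemma integrable_norm_pow_stdGaussian (n k : ℕ) :
    Integrable (fun y => ‖y‖ ^ k) (_root_.stdGaussian n) := by
  rw [stdGaussian_eq_stdGaussian_euclideanSpace]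
  exact (IsGaussian.memLp_id _ k (by simp)).integrable_norm_pow'

lemma integral_stdGaussian_eq_integral_pi {n : ℕ} (F : EuclideanSpace ℝ (Fin n) → ℝ) :
    ∫ y, F y ∂_root_.stdGaussian n
      = ∫ x, F (WithLp.toLp 2 x) ∂Measure.pi fun _ : Fin n => gaussianReal 0 1 :=
  integral_map_equiv _ _

lemma integral_norm_sq_stdGaussian (n : ℕ) :
    ∫ y, ‖y‖ ^ 2 ∂_root_.stdGaussian n = n := by
  simp_rw [integral_stdGaussian_eq_integral_pi, EuclideanSpace.real_norm_sq_eq]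
  exact integral_sum_sq_pi n

lemma integral_norm_pow_four_stdGaussian (n : ℕ) :
    ∫ y, ‖y‖ ^ 4 ∂_root_.stdGaussian n = n ^ 2 + 2 * n := by
  simp_rw [integral_stdGaussian_eq_integral_pi, show 4 = 2 * 2 from rfl, pow_mul,
    EuclideanSpace.real_norm_sq_eq]
  exact integral_sum_sq_sq_pi n

lemma lintegral_ofReal_norm_pow_of_map_eq_stdGaussian {n : ℕ} {Ω : Type*}
    {m0 : MeasurableSpace Ω} {P : Measure Ω} {U : Ω → EuclideanSpace ℝ (Fin n)}
    (hU : Measurable U) (hUlaw : P.map U = _root_.stdGaussian n) (k : ℕ) :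
    ∫⁻ ω, ENNReal.ofReal (‖U ω‖ ^ k) ∂P
      = ENNReal.ofReal (∫ y, ‖y‖ ^ k ∂_root_.stdGaussian n) := by
  rw [← lintegral_map (f := fun y => ENNReal.ofReal (‖y‖ ^ k)) (by fun_prop) hU, hUlaw,
    ofReal_integral_eq_lintegral_ofReal (integrable_norm_pow_stdGaussian n k)
      (ae_of_all _ fun _ => by positivity)]

-- The measure `A ↦ E[Y; A]`, restricted to `m`, is at most `c • P` there; integrate `g` against it.
lemma lintegral_ofReal_mul_le_of_condExp_le {Ω : Type*} {m m0 : MeasurableSpace Ω}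
    {P : Measure Ω} [IsFiniteMeasure P] (hm : m ≤ m0) {Y : Ω → ℝ} (hY : Integrable Y P)
    (hY0 : 0 ≤ᵐ[P] Y) {c : ℝ} (hc : ∀ᵐ ω ∂P, P[Y|m] ω ≤ c) {g : Ω → ℝ≥0∞}
    (hg : Measurable[m] g) :
    ∫⁻ ω, ENNReal.ofReal (Y ω) * g ω ∂P ≤ ENNReal.ofReal c * ∫⁻ ω, g ω ∂P := by
  have hν : (P.withDensity fun ω => ENNReal.ofReal (Y ω)).trim hm
      ≤ ENNReal.ofReal c • P.trim hm := by
    refine Measure.le_iff.2 fun s hs => ?_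
    rw [trim_measurableSet_eq hm hs, Measure.smul_apply, trim_measurableSet_eq hm hs,
      withDensity_apply _ (hm s hs), ← setLIntegral_condLExp hm _ _ hs, smul_eq_mul,
      ← setLIntegral_const]
    refine setLIntegral_mono_ae measurable_const.aemeasurable ?_
    filter_upwards [condLExp_ofReal m hY hY0, hc] with ω hω hωc _
    exact hω.trans_le (ENNReal.ofReal_le_ofReal hωc)
  calc ∫⁻ ω, ENNReal.ofReal (Y ω) * g ω ∂P
      = ∫⁻ ω, g ω ∂(P.withDensity fun ω => ENNReal.ofReal (Y ω)) :=
        (lintegral_withDensity_eq_lintegral_mul₀ hY.1.aemeasurable.ennreal_ofReal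
          (hg.mono hm le_rfl).aemeasurable).symm
    _ = ∫⁻ ω, g ω ∂((P.withDensity fun ω => ENNReal.ofReal (Y ω)).trim hm) :=
        (lintegral_trim hm hg).symm
    _ ≤ ∫⁻ ω, g ω ∂(ENNReal.ofReal c • P.trim hm) := lintegral_mono' hν le_rfl
    _ = ENNReal.ofReal c * ∫⁻ ω, g ω ∂P := by
        rw [lintegral_smul_measure, lintegral_trim hm hg, smul_eq_mul]

lemma lintegral_sq_mul_norm_sq_le {n : ℕ} {Ω : Type*} {m0 : MeasurableSpace Ω}
    {P : Measure Ω} [IsProbabilityMeasure P] {U : Ω → EuclideanSpace ℝ (Fin n)}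
    (hU : Measurable U) (hUlaw : P.map U = _root_.stdGaussian n) {e : Ω → ℝ}
    (he : Integrable (fun ω => e ω ^ 2) P) {V : ℝ}
    (hvar : ∀ᵐ ω ∂P, P[fun ω' => e ω' ^ 2|MeasurableSpace.comap U inferInstance] ω ≤ V ^ 2) :
    ∫⁻ ω, ENNReal.ofReal (e ω ^ 2) * ENNReal.ofReal (‖U ω‖ ^ 2) ∂P
      ≤ ENNReal.ofReal (V ^ 2) * ENNReal.ofReal n := by
  have hg : Measurable[MeasurableSpace.comap U inferInstance] fun ω => ENNReal.ofReal (‖U ω‖ ^ 2) :=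
    (by fun_prop : Measurable fun y : EuclideanSpace ℝ (Fin n) => ENNReal.ofReal (‖y‖ ^ 2)).comp
      (comap_measurable U)
  calc _ ≤ ENNReal.ofReal (V ^ 2) * ∫⁻ ω, ENNReal.ofReal (‖U ω‖ ^ 2) ∂P :=
        lintegral_ofReal_mul_le_of_condExp_le hU.comap_le he (ae_of_all _ fun _ => sq_nonneg _)
          hvar hg
    _ = _ := by
        rw [lintegral_ofReal_norm_pow_of_map_eq_stdGaussian hU hUlaw,
          integral_norm_sq_stdGaussian]

lemma dualNorm_nonneg {n : ℕ} {N : EuclideanSpace ℝ (Fin n) → ℝ} (hN : N 0 ≤ 1)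
    (v : EuclideanSpace ℝ (Fin n)) : 0 ≤ dualNorm N v := by
  by_cases hb : BddAbove ((fun x => ⟪v, x⟫) '' {x | N x ≤ 1})
  · exact le_csSup_of_le hb ⟨0, hN, rfl⟩ (inner_zero_right v).ge
  · rw [dualNorm, Real.sSup_of_not_bddAbove hb]

lemma norm_sub_le_of_norm_gradient_le {E : Type*} [NormedAddCommGroup E] [InnerProductSpace ℝ E]
    [CompleteSpace E] {f : E → ℝ} (hf : Differentiable ℝ f) {G : ℝ}
    (hG : ∀ y, ‖gradient f y‖ ≤ G) (a b : E) : ‖f a - f b‖ ≤ G * ‖a - b‖ :=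
  convex_univ.norm_image_sub_le_of_norm_fderiv_le (fun y _ => hf y)
    (fun y _ => ((InnerProductSpace.toDual ℝ E).symm.norm_map _).symm.trans_le (hG y))
    (Set.mem_univ b) (Set.mem_univ a)

lemma norm_sq_smul_difference_quotient_le {E : Type*} [NormedAddCommGroup E] [NormedSpace ℝ E]
    {f : E → ℝ} {G : ℝ} (hf : ∀ a b, ‖f a - f b‖ ≤ G * ‖a - b‖) (x u : E) {μ : ℝ} (hμ : 0 < μ)
    (b₁ b₂ : ℝ) :
    ‖((f (x + μ • u) + b₁ - f x - b₂) / μ) • u‖ ^ 2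
      ≤ 2 * G ^ 2 * ‖u‖ ^ 4 + 4 / μ ^ 2 * (b₁ ^ 2 * ‖u‖ ^ 2) + 4 / μ ^ 2 * (b₂ ^ 2 * ‖u‖ ^ 2) := by
  have ha : |f (x + μ • u) - f x| ≤ G * (μ * ‖u‖) := by
    simpa [norm_smul, abs_of_pos hμ] using hf (x + μ • u) x
  have hnum : (f (x + μ • u) + b₁ - f x - b₂) ^ 2
      ≤ 2 * (G * (μ * ‖u‖)) ^ 2 + 4 * b₁ ^ 2 + 4 * b₂ ^ 2 := by
    nlinarith [sq_le_sq' (abs_le.1 ha).1 (abs_le.1 ha).2,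
      sq_nonneg (f (x + μ • u) - f x - b₁ + b₂), sq_nonneg (b₁ + b₂)]
  calc ‖((f (x + μ • u) + b₁ - f x - b₂) / μ) • u‖ ^ 2
      = (f (x + μ • u) + b₁ - f x - b₂) ^ 2 * (‖u‖ ^ 2 / μ ^ 2) := by
        rw [norm_smul, norm_div, norm_eq_abs, norm_eq_abs, abs_of_pos hμ, mul_pow, div_pow, sq_abs]
        ring
    _ ≤ (2 * (G * (μ * ‖u‖)) ^ 2 + 4 * b₁ ^ 2 + 4 * b₂ ^ 2) * (‖u‖ ^ 2 / μ ^ 2) := by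
        gcongr
    _ = _ := by
        field_simp

lemma ofReal_dualNorm_sq_smul_difference_quotient_le {n : ℕ} {N : EuclideanSpace ℝ (Fin n) → ℝ}
    (hN : N 0 ≤ 1) {κ : ℝ} (hκ : ∀ v, dualNorm N v ≤ κ * ‖v‖) {f : EuclideanSpace ℝ (Fin n) → ℝ}
    {G : ℝ} (hf : ∀ a b, ‖f a - f b‖ ≤ G * ‖a - b‖) (x u : EuclideanSpace ℝ (Fin n)) {μ : ℝ}
    (hμ : 0 < μ) (b₁ b₂ : ℝ) :
    ENNReal.ofReal (dualNorm N (((f (x + μ • u) + b₁ - f x - b₂) / μ) • u) ^ 2)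
      ≤ ENNReal.ofReal (2 * κ ^ 2 * G ^ 2) * ENNReal.ofReal (‖u‖ ^ 4)
        + ENNReal.ofReal (4 * κ ^ 2 / μ ^ 2)
          * (ENNReal.ofReal (b₁ ^ 2) * ENNReal.ofReal (‖u‖ ^ 2))
        + ENNReal.ofReal (4 * κ ^ 2 / μ ^ 2)
          * (ENNReal.ofReal (b₂ ^ 2) * ENNReal.ofReal (‖u‖ ^ 2)) := by
  set v := ((f (x + μ • u) + b₁ - f x - b₂) / μ) • u
  have hdual : dualNorm N v ^ 2 ≤ κ ^ 2 * ‖v‖ ^ 2 := by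
    rw [← mul_pow]
    exact pow_le_pow_left₀ (dualNorm_nonneg hN v) (hκ v) 2
  simp (disch := positivity) only [← ENNReal.ofReal_mul, ← ENNReal.ofReal_add]
  refine ENNReal.ofReal_le_ofReal (hdual.trans ?_)
  calc κ ^ 2 * ‖v‖ ^ 2
      ≤ κ ^ 2 * (2 * G ^ 2 * ‖u‖ ^ 4 + 4 / μ ^ 2 * (b₁ ^ 2 * ‖u‖ ^ 2)
          + 4 / μ ^ 2 * (b₂ ^ 2 * ‖u‖ ^ 2)) :=
        mul_le_mul_of_nonneg_left (norm_sq_smul_difference_quotient_le hf x u hμ b₁ b₂)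
          (sq_nonneg κ)
    _ = _ := by ring

lemma lintegral_ofReal_dualNorm_sq_approx_subgradient_le {n : ℕ} {Ω : Type*}
    {m0 : MeasurableSpace Ω} {P : Measure Ω} [IsProbabilityMeasure P]
    {N : EuclideanSpace ℝ (Fin n) → ℝ} (hN : N 0 ≤ 1) {κ : ℝ}
    (hκ : ∀ v, dualNorm N v ≤ κ * ‖v‖) {f : EuclideanSpace ℝ (Fin n) → ℝ} {G : ℝ}
    (hf : ∀ a b, ‖f a - f b‖ ≤ G * ‖a - b‖) (x : EuclideanSpace ℝ (Fin n)) {μ : ℝ} (hμ : 0 < μ)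
    {V : ℝ} {U : Ω → EuclideanSpace ℝ (Fin n)} (hU : Measurable U)
    (hUlaw : P.map U = _root_.stdGaussian n) {e₁ e₂ : Ω → ℝ}
    (he₁ : Integrable (fun ω => e₁ ω ^ 2) P) (he₂ : Integrable (fun ω => e₂ ω ^ 2) P)
    (hvar₁ : ∀ᵐ ω ∂P, P[fun ω' => e₁ ω' ^ 2|MeasurableSpace.comap U inferInstance] ω ≤ V ^ 2)
    (hvar₂ : ∀ᵐ ω ∂P, P[fun ω' => e₂ ω' ^ 2|MeasurableSpace.comap U inferInstance] ω ≤ V ^ 2) :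
    ∫⁻ ω, ENNReal.ofReal
        (dualNorm N (((f (x + μ • U ω) + e₁ ω - f x - e₂ ω) / μ) • U ω) ^ 2) ∂P
      ≤ ENNReal.ofReal (κ ^ 2 * (2 * G ^ 2 * (n ^ 2 + 2 * n) + 8 * (V ^ 2 / μ ^ 2) * n)) := by
  set A := ENNReal.ofReal (2 * κ ^ 2 * G ^ 2)
  set B := ENNReal.ofReal (4 * κ ^ 2 / μ ^ 2)
  have hmeas (e : Ω → ℝ) (he : Integrable (fun ω => e ω ^ 2) P) :
      AEMeasurable (fun ω => B * (ENNReal.ofReal (e ω ^ 2) * ENNReal.ofReal (‖U ω‖ ^ 2))) P :=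
    aemeasurable_const.mul (he.1.aemeasurable.ennreal_ofReal.mul (by fun_prop))
  calc _ ≤ ∫⁻ ω, A * ENNReal.ofReal (‖U ω‖ ^ 4)
          + B * (ENNReal.ofReal (e₁ ω ^ 2) * ENNReal.ofReal (‖U ω‖ ^ 2))
          + B * (ENNReal.ofReal (e₂ ω ^ 2) * ENNReal.ofReal (‖U ω‖ ^ 2)) ∂P :=
        lintegral_mono fun ω =>
          ofReal_dualNorm_sq_smul_difference_quotient_le hN hκ hf x (U ω) hμ (e₁ ω) (e₂ ω)
    _ = A * ∫⁻ ω, ENNReal.ofReal (‖U ω‖ ^ 4) ∂P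
          + B * ∫⁻ ω, ENNReal.ofReal (e₁ ω ^ 2) * ENNReal.ofReal (‖U ω‖ ^ 2) ∂P
          + B * ∫⁻ ω, ENNReal.ofReal (e₂ ω ^ 2) * ENNReal.ofReal (‖U ω‖ ^ 2) ∂P := by
        rw [lintegral_add_right' _ (hmeas e₂ he₂), lintegral_add_right' _ (hmeas e₁ he₁),
          lintegral_const_mul' _ _ ENNReal.ofReal_ne_top,
          lintegral_const_mul' _ _ ENNReal.ofReal_ne_top,
          lintegral_const_mul' _ _ ENNReal.ofReal_ne_top]
    _ ≤ A * ENNReal.ofReal (n ^ 2 + 2 * n)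
          + B * (ENNReal.ofReal (V ^ 2) * ENNReal.ofReal n)
          + B * (ENNReal.ofReal (V ^ 2) * ENNReal.ofReal n) := by
        rw [lintegral_ofReal_norm_pow_of_map_eq_stdGaussian hU hUlaw,
          integral_norm_pow_four_stdGaussian]
        gcongr
        exacts [lintegral_sq_mul_norm_sq_le hU hUlaw he₁ hvar₁,
          lintegral_sq_mul_norm_sq_le hU hUlaw he₂ hvar₂]
    _ = _ := by
        simp (disch := positivity) only [A, B, ← ENNReal.ofReal_mul, ← ENNReal.ofReal_add]
        ring_nf

theorem second_moment_approx_subgradient_smooth_general {n : ℕ}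
    {Ω : Type*} {m0 : MeasurableSpace Ω} (P : Measure Ω) [IsProbabilityMeasure P]
    (nrm : EuclideanSpace ℝ (Fin n) → ℝ) (hnrm : IsNorm nrm)
    (f : EuclideanSpace ℝ (Fin n) → ℝ) (hsmooth : ContDiff ℝ 1 f)
    (L₁ : NNReal)
    (G : ℝ) (hG : ∀ y, ‖gradient f y‖ ≤ G)
    (x : EuclideanSpace ℝ (Fin n)) (μ : ℝ) (hμ : 0 < μ) (V : ℝ)
    (κ₁ : ℝ) (hκ₁le : ∀ v, dualNorm nrm v ≤ κ₁ * ‖v‖)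
    (U : Ω → EuclideanSpace ℝ (Fin n)) (hU : Measurable U)
    (hUlaw : Measure.map U P = stdGaussian n)
    (e₁ e₂ : Ω → ℝ)
    (he₁ : Integrable (fun ω => (e₁ ω) ^ 2) P) (he₂ : Integrable (fun ω => (e₂ ω) ^ 2) P)
    (hvar₁ : ∀ᵐ ω ∂P,
      (P[fun ω' => (e₁ ω') ^ 2|MeasurableSpace.comap U inferInstance]) ω ≤ V ^ 2)
    (hvar₂ : ∀ᵐ ω ∂P,
      (P[fun ω' => (e₂ ω') ^ 2|MeasurableSpace.comap U inferInstance]) ω ≤ V ^ 2)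
    (gtil : Ω → EuclideanSpace ℝ (Fin n))
    (hgtil : gtil = fun ω => ((f (x + μ • U ω) + e₁ ω - f x - e₂ ω) / μ) • U ω) :
    ∫⁻ ω, ENNReal.ofReal ((dualNorm nrm (gtil ω)) ^ 2) ∂P
      ≤ ENNReal.ofReal
          (κ₁ ^ 2 * (3 / 4 * (L₁ : ℝ) ^ 2 * μ ^ 2 * ((n : ℝ) + 6) ^ 3
            + 3 * G ^ 2 * ((n : ℝ) + 4) ^ 2 + 12 * (V ^ 2 / μ ^ 2) * n)) := by
  subst hgtil
  have hN : nrm 0 ≤ 1 := ((hnrm.1 0).2 rfl).trans_le zero_le_one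
  have hf := norm_sub_le_of_norm_gradient_le (hsmooth.differentiable one_ne_zero) hG
  refine (lintegral_ofReal_dualNorm_sq_approx_subgradient_le hN hκ₁le hf x hμ hU hUlaw he₁ he₂
    hvar₁ hvar₂).trans (ENNReal.ofReal_le_ofReal ?_)
  have hslack : 0 ≤ 3 / 4 * (L₁ : ℝ) ^ 2 * μ ^ 2 * ((n : ℝ) + 6) ^ 3
      + G ^ 2 * ((n : ℝ) ^ 2 + 20 * n + 48) + 4 * (V ^ 2 / μ ^ 2) * n := by positivity
  gcongr κ₁ ^ 2 * ?_
  linarith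

/-- Second moment of the approximated subgradient, smooth case: if `f` is continuously
differentiable with `L₁`-Lipschitz gradient w.r.t. `‖·‖₂` and `‖∇f‖₂ ≤ G`,
`U ~ N(0ₙ, Iₙ)`, and the oracle noises `e¹, e²` satisfy `E[(eⁱ)² | U] ≤ V²` a.s., then
`g̃ = ((f(x + μU) + e¹ − f(x) − e²)/μ) U` satisfies
`E[‖g̃‖_*²] ≤ κ₁² ((3/4) L₁² μ² (n+6)³ + 3 G² (n+4)² + 12 (V²/μ²) n)`. -/
theorem second_moment_approx_subgradient_smooth {n : ℕ}
    {Ω : Type*} {m0 : MeasurableSpace Ω} (P : Measure Ω) [IsProbabilityMeasure P]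
    (nrm : EuclideanSpace ℝ (Fin n) → ℝ) (hnrm : IsNorm nrm)
    (f : EuclideanSpace ℝ (Fin n) → ℝ) (hsmooth : ContDiff ℝ 1 f)
    (L₁ : NNReal) (hgrad : LipschitzWith L₁ (gradient f))
    (G : ℝ) (hG : ∀ y, ‖gradient f y‖ ≤ G)
    (x : EuclideanSpace ℝ (Fin n)) (μ : ℝ) (hμ : 0 < μ) (V : ℝ) (hV : 0 ≤ V)
    (κ₁ : ℝ) (hκ₁ : 0 < κ₁) (hκ₁le : ∀ v, dualNorm nrm v ≤ κ₁ * ‖v‖)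
    (U : Ω → EuclideanSpace ℝ (Fin n)) (hU : Measurable U)
    (hUlaw : Measure.map U P = stdGaussian n)
    (e₁ e₂ : Ω → ℝ)
    (he₁ : Integrable (fun ω => (e₁ ω) ^ 2) P) (he₂ : Integrable (fun ω => (e₂ ω) ^ 2) P)
    (hvar₁ : ∀ᵐ ω ∂P,
      (P[fun ω' => (e₁ ω') ^ 2|MeasurableSpace.comap U inferInstance]) ω ≤ V ^ 2)
    (hvar₂ : ∀ᵐ ω ∂P,
      (P[fun ω' => (e₂ ω') ^ 2|MeasurableSpace.comap U inferInstance]) ω ≤ V ^ 2)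
    (gtil : Ω → EuclideanSpace ℝ (Fin n))
    (hgtil : gtil = fun ω => ((f (x + μ • U ω) + e₁ ω - f x - e₂ ω) / μ) • U ω) :
    ∫⁻ ω, ENNReal.ofReal ((dualNorm nrm (gtil ω)) ^ 2) ∂P
      ≤ ENNReal.ofReal
          (κ₁ ^ 2 * (3 / 4 * (L₁ : ℝ) ^ 2 * μ ^ 2 * ((n : ℝ) + 6) ^ 3
            + 3 * G ^ 2 * ((n : ℝ) + 4) ^ 2 + 12 * (V ^ 2 / μ ^ 2) * n)) :=
  second_moment_approx_subgradient_smooth_general (m0 := m0) P nrm hnrm f hsmooth L₁ G hG x μ hμ V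
    κ₁ hκ₁le U hU hUlaw e₁ e₂ he₁ he₂ hvar₁ hvar₂ gtil hgtil
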